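/- For every p ∈ (1,2), there exists a finite constant C_p such that for all real numbers u, v > 0 and for i = 1, 2 (writing x = (u,v)): ∫ |y_i − x_i|^p Q_{(u,v)}(dy) ≤ C_p · min(u^{p−1}·v, u·v^{p−1}) ≤ C_p · (uv)^{p/2}. -/

import Mathlib

open MeasureTheory Real Set

noncomputable def Qdens (u v t : ℝ) : ℝ :=
  (4 / π) * (u * v * t) / (4 * u ^ 2 * v ^ 2 + (t ^ 2 + v ^ 2 - u ^ 2) ^ 2)

/-- The harmonic measure `Q_x` of planar Brownian motion started at `x ∈ [0,∞)²` and
stopped upon leaving the open quadrant `(0,∞)²`; for boundary points it is `δ_x`. -/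
noncomputable def Qmeas (x : ℝ × ℝ) : Measure (ℝ × ℝ) :=
  if 0 < x.1 ∧ 0 < x.2 then
    Measure.map (fun t => (t, (0 : ℝ)))
      ((volume.restrict (Ioi (0 : ℝ))).withDensity fun t => ENNReal.ofReal (Qdens x.1 x.2 t))
    + Measure.map (fun t => ((0 : ℝ), t))
      ((volume.restrict (Ioi (0 : ℝ))).withDensity fun t => ENNReal.ofReal (Qdens x.2 x.1 t))
  else Measure.dirac x

/-!
Write `m = max u v`, so that `min (u^(p-1) v) (u v^(p-1)) = u v m^(p-2)`. Since
`2 m t ≤ (t + u)² + v²`, the density of `Q_(u,v)` on the `x`-axis is at most `2u/m` times the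
Cauchy density with location `u` and scale `v`. This bounds the mass of the `y`-axis part by
`2v/m`, which accounts for the term `u^p · 2v/m ≤ 2 u v m^(p-2)`, and bounds the `x`-axis integrand
on `|t - u| ≤ m` by `(2/π)(uv/m) |t - u|^(p-2)`, integrable because `p > 1`. For `t > u + m` the
density is `O(uv t^(-3))` and `t^(p-3)` is integrable at infinity because `p < 2`. The second
coordinate follows from the symmetry `swap_* Q_(u,v) = Q_(v,u)`.
-/

open ProbabilityTheory
open scoped ENNReal NNReal

lemma intervalIntegrable_abs_rpow {r : ℝ} (hr : -1 < r) (m : ℝ) :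
    IntervalIntegrable (fun w : ℝ ↦ |w| ^ r) volume (-m) m := by
  wlog hm : 0 ≤ m generalizing m
  · simpa using (this (-m) (by linarith)).symm
  have hpos : IntervalIntegrable (fun w : ℝ ↦ |w| ^ r) volume 0 m :=
    (intervalIntegral.intervalIntegrable_rpow' hr).congr_ae <| ae_restrict_of_forall_mem
      measurableSet_uIoc fun w hw ↦ by
        rw [uIoc_of_le hm] at hw; simp [abs_of_pos hw.1]
  have hneg := ((IntervalIntegrable.iff_comp_neg).1 hpos).symm
  simp only [abs_neg, neg_zero] at hneg
  exact hneg.trans hpos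

lemma lintegral_Ioc_abs_sub_rpow {r : ℝ} (hr : -1 < r) (c : ℝ) {m : ℝ} (hm : 0 ≤ m) :
    ∫⁻ t in Ioc (c - m) (c + m), ENNReal.ofReal (|t - c| ^ r)
      = ENNReal.ofReal (2 * (m ^ (r + 1) / (r + 1))) := by
  have hint : IntervalIntegrable (fun t ↦ |t - c| ^ r) volume (c - m) (c + m) := by
    simpa [add_comm, sub_eq_neg_add] using (intervalIntegrable_abs_rpow hr m).comp_sub_right c
  have half : ∫ w in (0 : ℝ)..m, |w| ^ r = m ^ (r + 1) / (r + 1) := by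
    rw [intervalIntegral.integral_congr (g := fun w ↦ w ^ r) fun w hw ↦ by
      rw [uIcc_of_le hm] at hw; simp [abs_of_nonneg hw.1]]
    rw [integral_rpow (Or.inl hr), zero_rpow (by linarith), sub_zero]
  have reflect : ∫ w in -m..0, |w| ^ r = ∫ w in (0 : ℝ)..m, |w| ^ r := by
    simpa using (intervalIntegral.integral_comp_neg (a := 0) (b := m) fun w ↦ |w| ^ r).symm
  have hsymm := intervalIntegrable_abs_rpow hr m
  rw [← ofReal_integral_eq_lintegral_ofReal
      ((intervalIntegrable_iff_integrableOn_Ioc_of_le (by linarith)).1 hint)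
      (ae_of_all _ fun t ↦ rpow_nonneg (abs_nonneg _) _),
    ← intervalIntegral.integral_of_le (by linarith),
    intervalIntegral.integral_comp_sub_right (fun w ↦ |w| ^ r), sub_sub_cancel_left,
    add_sub_cancel_left, ← intervalIntegral.integral_add_adjacent_intervals (b := 0)
      (hsymm.mono_set (uIcc_subset_uIcc_left (by simp [hm])))
      (hsymm.mono_set (uIcc_subset_uIcc_right (by simp [hm]))), reflect, half, two_mul]

lemma lintegral_Ioi_rpow {r c : ℝ} (hr : r < -1) (hc : 0 < c) :
    ∫⁻ t in Ioi c, ENNReal.ofReal (t ^ r) = ENNReal.ofReal (-c ^ (r + 1) / (r + 1)) := by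
  rw [← integral_Ioi_rpow_of_lt hr hc,
    ofReal_integral_eq_lintegral_ofReal (integrableOn_Ioi_rpow_of_lt hr hc)]
  filter_upwards [self_mem_ae_restrict measurableSet_Ioi] with t ht
  exact rpow_nonneg (hc.trans ht).le r

lemma two_mul_max_mul_le {a : ℝ} (ha : 0 ≤ a) (b t : ℝ) :
    2 * max a b * t ≤ (t + a) ^ 2 + b ^ 2 := by
  rcases le_total t 0 with ht | ht
  · nlinarith [ha.trans (le_max_left a b)]
  · rcases max_cases a b with ⟨h, _⟩ | ⟨h, _⟩ <;> rw [h] <;>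
      nlinarith [sq_nonneg (t - a), sq_nonneg (t - b)]

lemma cauchyPDFReal_mul_rpow_abs_sub_le {p : ℝ} (hp : p ≠ 0) (x₀ : ℝ) (γ : ℝ≥0) (x : ℝ) :
    cauchyPDFReal x₀ γ x * |x - x₀| ^ p ≤ π⁻¹ * γ * |x - x₀| ^ (p - 2) := by
  rw [cauchyPDFReal_def]
  rcases eq_or_ne x x₀ with rfl | hx
  · rw [sub_self, abs_zero, zero_rpow hp, mul_zero]; positivity
  have hw : 0 < |x - x₀| := abs_pos.mpr (sub_ne_zero.mpr hx)
  have hsplit : |x - x₀| ^ p = |x - x₀| ^ (p - 2) * (x - x₀) ^ 2 := by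
    rw [← sq_abs, ← rpow_natCast, ← rpow_add hw]; norm_num
  have hfrac : (x - x₀) ^ 2 * ((x - x₀) ^ 2 + (γ : ℝ) ^ 2)⁻¹ ≤ 1 := by
    rw [← div_eq_mul_inv]
    exact div_le_one_of_le₀ (le_add_of_nonneg_right (sq_nonneg _)) (by positivity)
  calc π⁻¹ * γ * ((x - x₀) ^ 2 + γ ^ 2)⁻¹ * |x - x₀| ^ p
      = π⁻¹ * γ * |x - x₀| ^ (p - 2) * ((x - x₀) ^ 2 * ((x - x₀) ^ 2 + (γ : ℝ) ^ 2)⁻¹) := by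
        rw [hsplit]; ring
    _ ≤ π⁻¹ * γ * |x - x₀| ^ (p - 2) := mul_le_of_le_one_right (by positivity) hfrac

lemma Qdens_eq (u v t : ℝ) :
    Qdens u v t = 4 / π * (u * v * t) / (((t - u) ^ 2 + v ^ 2) * ((t + u) ^ 2 + v ^ 2)) := by
  rw [Qdens]; ring_nf

lemma continuous_Qdens {u v : ℝ} (hv : v ≠ 0) : Continuous (Qdens u v) := by
  simp_rw [funext (Qdens_eq u v)]
  exact Continuous.div (by fun_prop) (by fun_prop) fun t ↦ by positivity

lemma Qdens_le_mul_cauchyPDFReal {a b : ℝ} (ha : 0 ≤ a) (hb : 0 < b) (t : ℝ) :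
    Qdens a b t ≤ 2 * a / max a b * cauchyPDFReal a b.toNNReal t := by
  rw [Qdens_eq, cauchyPDFReal_def, Real.coe_toNNReal _ hb.le, div_le_iff₀ (by positivity)]
  calc 4 / π * (a * b * t) = 2 * a * b / (π * max a b) * (2 * max a b * t) := by
        field_simp; ring
    _ ≤ 2 * a * b / (π * max a b) * ((t + a) ^ 2 + b ^ 2) := by
        gcongr; exact two_mul_max_mul_le ha b t
    _ = _ := by field_simp

lemma Qdens_le_of_two_mul_le {a b t : ℝ} (ha : 0 ≤ a) (hb : 0 ≤ b) (ht : 0 < t)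
    (hat : 2 * a ≤ t) : Qdens a b t ≤ 16 / π * (a * b) / t ^ 3 := by
  have h₁ : t ^ 2 / 4 ≤ (t - a) ^ 2 + b ^ 2 := by nlinarith
  have h₂ : t ^ 2 ≤ (t + a) ^ 2 + b ^ 2 := by nlinarith
  have : 0 < ((t - a) ^ 2 + b ^ 2) * ((t + a) ^ 2 + b ^ 2) :=
    mul_pos ((by positivity : 0 < t ^ 2 / 4).trans_le h₁) ((by positivity : 0 < t ^ 2).trans_le h₂)
  rw [Qdens_eq, div_le_div_iff₀ this (by positivity)]
  calc 4 / π * (a * b * t) * t ^ 3 = 16 / π * (a * b) * (t ^ 2 / 4 * t ^ 2) := by ring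
    _ ≤ 16 / π * (a * b) * (((t - a) ^ 2 + b ^ 2) * ((t + a) ^ 2 + b ^ 2)) := by gcongr

lemma lintegral_Qmeas {u v : ℝ} (hu : 0 < u) (hv : 0 < v) {G : ℝ × ℝ → ℝ≥0∞}
    (hG : Measurable G) :
    ∫⁻ y, G y ∂Qmeas (u, v) =
      (∫⁻ t in Ioi 0, ENNReal.ofReal (Qdens u v t) * G (t, 0))
        + ∫⁻ t in Ioi 0, ENNReal.ofReal (Qdens v u t) * G (0, t) := by
  rw [Qmeas, if_pos ⟨hu, hv⟩, lintegral_add_measure,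
    lintegral_map hG (by fun_prop), lintegral_map hG (by fun_prop),
    lintegral_withDensity_eq_lintegral_mul _ (continuous_Qdens hv.ne').measurable.ennreal_ofReal
      (by fun_prop),
    lintegral_withDensity_eq_lintegral_mul _ (continuous_Qdens hu.ne').measurable.ennreal_ofReal
      (by fun_prop)]
  rfl

lemma Qmeas_map_swap (x : ℝ × ℝ) : (Qmeas x).map Prod.swap = Qmeas x.swap := by
  simp only [Qmeas, Prod.fst_swap, Prod.snd_swap]
  by_cases hx : 0 < x.1 ∧ 0 < x.2
  · rw [if_pos hx, if_pos hx.symm, Measure.map_add _ _ measurable_swap,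
      Measure.map_map measurable_swap (by fun_prop), Measure.map_map measurable_swap (by fun_prop),
      add_comm]
    rfl
  · rw [if_neg hx, if_neg (mt And.symm hx), Measure.map_dirac' measurable_swap]

lemma integral_Qmeas_comp_snd (f : ℝ → ℝ) (x : ℝ × ℝ) :
    ∫ y, f y.2 ∂Qmeas x = ∫ y, f y.1 ∂Qmeas x.swap := by
  rw [← Qmeas_map_swap]
  exact (integral_map_equiv MeasurableEquiv.prodComm fun y : ℝ × ℝ ↦ f y.1).symm

lemma lintegral_Qdens_le {a b : ℝ} (ha : 0 ≤ a) (hb : 0 < b) :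
    ∫⁻ t in Ioi 0, ENNReal.ofReal (Qdens a b t) ≤ ENNReal.ofReal (2 * a / max a b) := by
  calc ∫⁻ t in Ioi 0, ENNReal.ofReal (Qdens a b t)
      ≤ ∫⁻ t, ENNReal.ofReal (2 * a / max a b) * cauchyPDF a b.toNNReal t :=
        (setLIntegral_le_lintegral _ _).trans <| lintegral_mono fun t ↦ by
          rw [cauchyPDF_def, ← ENNReal.ofReal_mul (by positivity)]
          exact ENNReal.ofReal_le_ofReal (Qdens_le_mul_cauchyPDFReal ha hb t)
    _ = ENNReal.ofReal (2 * a / max a b) := by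
        rw [lintegral_const_mul _ (measurable_cauchyPDF _ _),
          lintegral_cauchyPDF_eq_one _ (by simpa using hb), mul_one]

lemma lintegral_Qdens_mul_rpow_le {p u v : ℝ} (hp : 1 ≤ p) (hu : 0 < u) (hv : 0 < v) :
    ∫⁻ t in Ioi 0, ENNReal.ofReal (Qdens v u t) * ENNReal.ofReal (u ^ p)
      ≤ ENNReal.ofReal (2 * (u * v * max u v ^ (p - 2))) := by
  have hm : 0 < max u v := lt_max_of_lt_left hu
  have hpow : u ^ (p - 1) ≤ max u v ^ (p - 1) :=
    rpow_le_rpow hu.le (le_max_left u v) (by linarith)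
  rw [lintegral_mul_const' _ _ ENNReal.ofReal_ne_top]
  calc (∫⁻ t in Ioi 0, ENNReal.ofReal (Qdens v u t)) * ENNReal.ofReal (u ^ p)
      ≤ ENNReal.ofReal (2 * v / max u v) * ENNReal.ofReal (u ^ p) := by
        gcongr; simpa [max_comm] using lintegral_Qdens_le hv.le hu
    _ = ENNReal.ofReal (2 * v * u / max u v * u ^ (p - 1)) := by
        rw [← ENNReal.ofReal_mul (by positivity), rpow_sub_one hu.ne']
        congr 1; field_simp
    _ ≤ ENNReal.ofReal (2 * (u * v * max u v ^ (p - 2))) := by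
        apply ENNReal.ofReal_le_ofReal
        rw [show p - 2 = p - 1 - 1 by ring, rpow_sub_one hm.ne']
        calc 2 * v * u / max u v * u ^ (p - 1)
            ≤ 2 * v * u / max u v * max u v ^ (p - 1) := by gcongr
          _ = _ := by field_simp

lemma lintegral_Ioc_Qdens_mul_rpow_abs_sub_le {p u v : ℝ} (hp : 1 < p) (hu : 0 ≤ u)
    (hv : 0 < v) :
    ∫⁻ t in Ioc (u - max u v) (u + max u v), ENNReal.ofReal (Qdens u v t * |t - u| ^ p)
      ≤ ENNReal.ofReal (4 / (π * (p - 1)) * (u * v * max u v ^ (p - 2))) := by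
  set m := max u v
  have hm : 0 < m := lt_max_of_lt_right hv
  calc _ ≤ ∫⁻ t in Ioc (u - m) (u + m),
          ENNReal.ofReal (2 * u / m * (π⁻¹ * v)) * ENNReal.ofReal (|t - u| ^ (p - 2)) :=
        lintegral_mono fun t ↦ by
          rw [← ENNReal.ofReal_mul (by positivity)]
          apply ENNReal.ofReal_le_ofReal
          calc Qdens u v t * |t - u| ^ p
              ≤ 2 * u / m * (cauchyPDFReal u v.toNNReal t * |t - u| ^ p) := by
                rw [← mul_assoc]
                exact mul_le_mul_of_nonneg_right (Qdens_le_mul_cauchyPDFReal hu hv t)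
                  (rpow_nonneg (abs_nonneg _) p)
            _ ≤ 2 * u / m * (π⁻¹ * v * |t - u| ^ (p - 2)) := by
                refine mul_le_mul_of_nonneg_left ?_ (by positivity)
                simpa [Real.coe_toNNReal _ hv.le] using
                  cauchyPDFReal_mul_rpow_abs_sub_le (by positivity) u v.toNNReal t
            _ = _ := by ring
    _ = ENNReal.ofReal (2 * u / m * (π⁻¹ * v)) * ENNReal.ofReal (2 * (m ^ (p - 1) / (p - 1))) := by
        rw [lintegral_const_mul' _ _ ENNReal.ofReal_ne_top,
          lintegral_Ioc_abs_sub_rpow (by linarith) u hm.le, show p - 2 + 1 = p - 1 by ring]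
    _ = _ := by
        rw [← ENNReal.ofReal_mul (by positivity), show p - 1 = p - 2 + 1 by ring,
          rpow_add_one hm.ne', show p - 2 + 1 = p - 1 by ring]
        congr 1; field_simp; ring

lemma lintegral_Ioi_Qdens_mul_rpow_abs_sub_le {p u v : ℝ} (hp₀ : 0 ≤ p) (hp : p < 2)
    (hu : 0 ≤ u) (hv : 0 < v) :
    ∫⁻ t in Ioi (u + max u v), ENNReal.ofReal (Qdens u v t * |t - u| ^ p)
      ≤ ENNReal.ofReal (16 / (π * (2 - p)) * (u * v * max u v ^ (p - 2))) := by
  set m := max u v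
  have hm : 0 < m := lt_max_of_lt_right hv
  have hum : u ≤ m := le_max_left u v
  calc _ ≤ ∫⁻ t in Ioi (u + m), ENNReal.ofReal (16 / π * (u * v)) * ENNReal.ofReal (t ^ (p - 3)) :=
        setLIntegral_mono' measurableSet_Ioi fun t ht ↦ by
          have ht : u + m < t := ht
          have ht0 : 0 < t := by linarith
          rw [← ENNReal.ofReal_mul (by positivity)]
          apply ENNReal.ofReal_le_ofReal
          calc Qdens u v t * |t - u| ^ p ≤ 16 / π * (u * v) / t ^ 3 * t ^ p :=
                mul_le_mul (Qdens_le_of_two_mul_le hu hv.le ht0 (by linarith))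
                  (rpow_le_rpow (abs_nonneg _) (abs_sub_le_iff.2 ⟨by linarith, by linarith⟩) hp₀)
                  (rpow_nonneg (abs_nonneg _) p) (by positivity)
            _ = 16 / π * (u * v) * t ^ (p - 3) := by
                rw [rpow_sub ht0, ← rpow_natCast]; push_cast; ring
    _ = ENNReal.ofReal (16 / π * (u * v)) * ENNReal.ofReal (-(u + m) ^ (p - 2) / (p - 2)) := by
        rw [lintegral_const_mul' _ _ ENNReal.ofReal_ne_top,
          lintegral_Ioi_rpow (by linarith) (by linarith), show p - 3 + 1 = p - 2 by ring]
    _ ≤ _ := by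
        rw [← ENNReal.ofReal_mul (by positivity)]
        apply ENNReal.ofReal_le_ofReal
        calc 16 / π * (u * v) * (-(u + m) ^ (p - 2) / (p - 2))
            = 16 / (π * (2 - p)) * (u * v * (u + m) ^ (p - 2)) := by
              rw [neg_div, ← div_neg, neg_sub]; field_simp
          _ ≤ _ := by
              have : (u + m) ^ (p - 2) ≤ m ^ (p - 2) :=
                rpow_le_rpow_of_nonpos hm (by linarith) (by linarith)
              gcongr

lemma lintegral_Qdens_mul_rpow_abs_sub_le {p u v : ℝ} (hp1 : 1 < p) (hp2 : p < 2) (hu : 0 ≤ u)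
    (hv : 0 < v) :
    ∫⁻ t in Ioi 0, ENNReal.ofReal (Qdens u v t) * ENNReal.ofReal (|t - u| ^ p)
      ≤ ENNReal.ofReal
          ((4 / (π * (p - 1)) + 16 / (π * (2 - p))) * (u * v * max u v ^ (p - 2))) := by
  have hcover : Ioi (0 : ℝ) ⊆ Ioc (u - max u v) (u + max u v) ∪ Ioi (u + max u v) := by
    rw [Ioc_union_Ioi_eq_Ioi (by linarith [le_max_right u v])]
    exact Ioi_subset_Ioi (by linarith [le_max_left u v])
  simp_rw [← ENNReal.ofReal_mul' (rpow_nonneg (abs_nonneg _) p)]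
  calc _ ≤ _ := (lintegral_mono_set hcover).trans (lintegral_union_le _ _ _)
    _ ≤ _ := add_le_add (lintegral_Ioc_Qdens_mul_rpow_abs_sub_le hp1 hu hv)
        (lintegral_Ioi_Qdens_mul_rpow_abs_sub_le (by linarith) hp2 hu hv)
    _ = _ := by
        rw [← ENNReal.ofReal_add (by positivity) (by positivity), add_mul]

theorem integral_rpow_abs_fst_sub_le {p u v : ℝ} (hp1 : 1 < p) (hp2 : p < 2) (hu : 0 < u)
    (hv : 0 < v) :
    ∫ y, |y.1 - u| ^ p ∂Qmeas (u, v)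
      ≤ (4 / (π * (p - 1)) + 16 / (π * (2 - p)) + 2) * (u * v * max u v ^ (p - 2)) := by
  have hcont : Continuous fun y : ℝ × ℝ ↦ |y.1 - u| ^ p :=
    (by fun_prop : Continuous fun y : ℝ × ℝ ↦ |y.1 - u|).rpow_const fun _ ↦ Or.inr (by linarith)
  rw [integral_eq_lintegral_of_nonneg_ae (ae_of_all _ fun _ ↦ by positivity)
    hcont.aestronglyMeasurable]
  refine ENNReal.toReal_le_of_le_ofReal (by positivity) ?_
  rw [lintegral_Qmeas hu hv hcont.measurable.ennreal_ofReal]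
  simp only [zero_sub, abs_neg, abs_of_pos hu]
  calc _ ≤ ENNReal.ofReal ((4 / (π * (p - 1)) + 16 / (π * (2 - p))) * (u * v * max u v ^ (p - 2)))
        + ENNReal.ofReal (2 * (u * v * max u v ^ (p - 2))) :=
        add_le_add (lintegral_Qdens_mul_rpow_abs_sub_le hp1 hp2 hu.le hv)
          (lintegral_Qdens_mul_rpow_le hp1.le hu hv)
    _ = _ := by rw [← ENNReal.ofReal_add (by positivity) (by positivity), ← add_mul]

lemma min_rpow_mul_eq {p u v : ℝ} (hp : p ≤ 2) (hu : 0 < u) (hv : 0 < v) :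
    min (u ^ (p - 1) * v) (u * v ^ (p - 1)) = u * v * max u v ^ (p - 2) := by
  have hsplit : ∀ w : ℝ, 0 < w → w ^ (p - 1) = w * w ^ (p - 2) := fun w hw ↦ by
    rw [show p - 1 = p - 2 + 1 by ring, rpow_add_one hw.ne', mul_comm]
  rw [hsplit u hu, hsplit v hv, show u * u ^ (p - 2) * v = u * v * u ^ (p - 2) by ring,
    show u * (v * v ^ (p - 2)) = u * v * v ^ (p - 2) by ring,
    ← mul_min_of_nonneg _ _ (by positivity)]
  rcases le_total u v with h | h
  · rw [max_eq_right h, min_eq_right (rpow_le_rpow_of_nonpos hu h (by linarith))]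
  · rw [max_eq_left h, min_eq_left (rpow_le_rpow_of_nonpos hv h (by linarith))]

lemma min_rpow_mul_le {u v : ℝ} (hu : 0 < u) (hv : 0 < v) (p : ℝ) :
    min (u ^ (p - 1) * v) (u * v ^ (p - 1)) ≤ (u * v) ^ (p / 2) := by
  have hprod : u ^ (p - 1) * v * (u * v ^ (p - 1)) = (u * v) ^ p := by
    rw [mul_rpow hu.le hv.le, rpow_sub_one hu.ne', rpow_sub_one hv.ne']
    field_simp
  have hmin : 0 ≤ min (u ^ (p - 1) * v) (u * v ^ (p - 1)) := by positivity
  calc min (u ^ (p - 1) * v) (u * v ^ (p - 1))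
      = √(min (u ^ (p - 1) * v) (u * v ^ (p - 1)) * min (u ^ (p - 1) * v) (u * v ^ (p - 1))) :=
        (sqrt_mul_self hmin).symm
    _ ≤ √(u ^ (p - 1) * v * (u * v ^ (p - 1))) :=
        sqrt_le_sqrt (mul_le_mul (min_le_left _ _) (min_le_right _ _) hmin (by positivity))
    _ = (u * v) ^ (p / 2) := by
        rw [hprod, sqrt_eq_rpow, ← rpow_mul (by positivity)]; ring_nf

/-- For every `p ∈ (1,2)` there is a finite constant `C_p` such that for all `u, v > 0`
(writing `x = (u,v)`) and `i = 1, 2`: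
`∫ |y_i − x_i|^p Q_{(u,v)}(dy) ≤ C_p min(u^{p−1}v, uv^{p−1}) ≤ C_p (uv)^{p/2}`. -/
theorem harmonic_measure_centered_moment_bound (p : ℝ) (hp1 : 1 < p) (hp2 : p < 2) :
    ∃ C : ℝ, ∀ u v : ℝ, 0 < u → 0 < v →
      ((∫ y, |y.1 - u| ^ p ∂(Qmeas (u, v)))
          ≤ C * min (u ^ (p - 1) * v) (u * v ^ (p - 1))
        ∧ (∫ y, |y.2 - v| ^ p ∂(Qmeas (u, v)))
          ≤ C * min (u ^ (p - 1) * v) (u * v ^ (p - 1)))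
      ∧ C * min (u ^ (p - 1) * v) (u * v ^ (p - 1)) ≤ C * (u * v) ^ (p / 2) := by
  have hC : 0 ≤ 4 / (π * (p - 1)) + 16 / (π * (2 - p)) + 2 := by positivity
  refine ⟨_, fun u v hu hv ↦ ⟨⟨?_, ?_⟩, mul_le_mul_of_nonneg_left (min_rpow_mul_le hu hv p) hC⟩⟩
  · rw [min_rpow_mul_eq hp2.le hu hv]
    exact integral_rpow_abs_fst_sub_le hp1 hp2 hu hv
  · rw [integral_Qmeas_comp_snd (fun s ↦ |s - v| ^ p), Prod.swap_prod_mk,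
      min_rpow_mul_eq hp2.le hu hv, max_comm, mul_comm u v]
    exact integral_rpow_abs_fst_sub_le hp1 hp2 hv hu
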